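/- Let G be an abelian group, let m : G → ℂ be a nonzero bounded multiplicative function with m(−x) = m(x) for all x ∈ G, let a : G → ℂ be a nonzero additive function, and let b : G → ℂ be a bounded function with b(−x) = −b(x) for all x ∈ G. Define f = (1/2)a²·m + b, g = m, and h = −i·a·m. Then the function (x,y) ↦ f(x−y) − f(x)g(y) − g(x)f(y) − h(x)h(y) is bounded on G×G. -/

import Mathlib

/-- A complex-valued function on `G` is bounded. -/
def Bdd {G : Type*} (F : G → ℂ) : Prop := ∃ C : ℝ, ∀ x : G, ‖F x‖ ≤ C

/-! The multiplicative and additive parts cancel exactly: since `m` is even, `m (x - y) = m x * m y`,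
and then `(a x - a y)² = a x² + a y² - 2 a x a y` kills the `a`-terms, because `h x * h y = -a x a y m x m y`.
What remains, `b (x - y) - b x * m y - m x * b y`, is bounded as `b` and `m` are. -/

namespace Bdd

variable {G H : Type*} {F F' : G → ℂ}

theorem comp (hF : Bdd F) (φ : H → G) : Bdd (F ∘ φ) :=
  let ⟨C, hC⟩ := hF
  ⟨C, fun x => hC (φ x)⟩

theorem sub (hF : Bdd F) (hF' : Bdd F') : Bdd fun x => F x - F' x :=
  let ⟨C, hC⟩ := hF
  let ⟨C', hC'⟩ := hF'
  ⟨C + C', fun x => (norm_sub_le _ _).trans (add_le_add (hC x) (hC' x))⟩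

theorem mul (hF : Bdd F) (hF' : Bdd F') : Bdd fun x => F x * F' x := by
  obtain ⟨C, hC⟩ := hF
  obtain ⟨C', hC'⟩ := hF'
  refine ⟨max C 0 * max C' 0, fun x => ?_⟩
  rw [norm_mul]
  exact mul_le_mul ((hC x).trans (le_max_left _ _)) ((hC' x).trans (le_max_left _ _))
    (norm_nonneg _) (le_max_right _ _)

end Bdd

theorem stmt_13_general {G : Type*} [AddCommGroup G]
    (m a b : G → ℂ)
    (hm : ∀ x y : G, m (x + y) = m x * m y) (hmb : Bdd m)
    (hmsym : ∀ x : G, m (-x) = m x)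
    (ha : ∀ x y : G, a (x + y) = a x + a y)
    (hb : Bdd b)
    (f g h : G → ℂ)
    (hf : ∀ x : G, f x = (1 / 2) * (a x) ^ 2 * m x + b x)
    (hg : ∀ x : G, g x = m x)
    (hh : ∀ x : G, h x = -Complex.I * a x * m x) :
    ∃ C : ℝ, ∀ x y : G,
      ‖f (x - y) - f x * g y - g x * f y - h x * h y‖ ≤ C := by
  have hm_sub (x y : G) : m (x - y) = m x * m y := by rw [sub_eq_add_neg, hm, hmsym]
  have ha_sub (x y : G) : a (x - y) = a x - a y := map_sub (AddMonoidHom.mk' a ha) x y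
  have hdefect (x y : G) : f (x - y) - f x * g y - g x * f y - h x * h y
      = b (x - y) - b x * m y - m x * b y := by
    rw [hf, hf, hf, hg, hg, hh, hh, hm_sub, ha_sub]
    linear_combination (-(a x * a y * m x * m y)) * Complex.I_sq
  have hbdd : Bdd fun p : G × G => b (p.1 - p.2) - b p.1 * m p.2 - m p.1 * b p.2 :=
    (((hb.comp fun p : G × G => p.1 - p.2).sub ((hb.comp Prod.fst).mul (hmb.comp Prod.snd))).sub
      ((hmb.comp Prod.fst).mul (hb.comp Prod.snd)))
  obtain ⟨C, hC⟩ := hbdd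
  exact ⟨C, fun x y => hdefect x y ▸ hC (x, y)⟩

theorem stmt_13 {G : Type*} [AddCommGroup G]
    (m a b : G → ℂ)
    (hm : ∀ x y : G, m (x + y) = m x * m y) (hm0 : m ≠ 0) (hmb : Bdd m)
    (hmsym : ∀ x : G, m (-x) = m x)
    (ha : ∀ x y : G, a (x + y) = a x + a y) (ha0 : a ≠ 0)
    (hb : Bdd b) (hbodd : ∀ x : G, b (-x) = -b x)
    (f g h : G → ℂ)
    (hf : ∀ x : G, f x = (1 / 2) * (a x) ^ 2 * m x + b x)
    (hg : ∀ x : G, g x = m x)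
    (hh : ∀ x : G, h x = -Complex.I * a x * m x) :
    ∃ C : ℝ, ∀ x y : G,
      ‖f (x - y) - f x * g y - g x * f y - h x * h y‖ ≤ C :=
  stmt_13_general m a b hm hmb hmsym ha hb f g h hf hg hh
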